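/- Let M be an n×n matrix over 𝔽₂ with zero diagonal, p, p' distinct standard basis vectors with ⟨Mp, p'⟩ = ⟨Mp', p⟩ = 0, and suppose ⟨Mᵀv, p⟩⟨Mu, p'⟩ + ⟨Mu, p⟩⟨Mᵀv, p'⟩ = 0 for all standard basis u, v, and there is A with ⟨Mx, Mᵀy⟩ = ⟨Mx, y⟩(1 + ⟨A, x + y⟩) for all standard basis x, y. Define P(u) = ⟨Mu, p⟩((Mp + p') + ⟨u, Mp⟩u) and Pᵀ(v) = ⟨Mᵀv, p⟩((Mᵀp + p') + ⟨v, Mᵀp⟩v). Then for distinct standard basis vectors u, v both different from p': ⟨P(u), Pᵀ(v)⟩ = ⟨Mu, p⟩·⟨Mᵀv, p⟩·(1 + ⟨S(M)p, u⟩ + ⟨S(M)p, v⟩). -/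
import Mathlib


open Matrix

/-- Standard basis vector over the field with two elements. -/
def e {n : ℕ} (i : Fin n) : Fin n → ZMod 2 := Pi.single i 1

/-- `SM M` is the matrix with `⟨SM M x, y⟩ = ⟨M x, y⟩ * ⟨M y, x⟩` on standard basis vectors. -/
def SM {n : ℕ} (M : Matrix (Fin n) (Fin n) (ZMod 2)) : Matrix (Fin n) (Fin n) (ZMod 2) :=
  Matrix.of fun i j => (M.mulVec (e j) ⬝ᵥ e i) * (M.mulVec (e i) ⬝ᵥ e j)

/-- `P M p p' u = ⟨M u, p⟩ • ((M p + p') + ⟨u, M p⟩ • u)` on standard basis vectors. -/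
def P {n : ℕ} (M : Matrix (Fin n) (Fin n) (ZMod 2)) (p p' u : Fin n) : Fin n → ZMod 2 :=
  (M.mulVec (e u) ⬝ᵥ e p) • ((M.mulVec (e p) + e p') + (e u ⬝ᵥ M.mulVec (e p)) • e u)

/-- `PT M p p' u` is `P` formed with the transpose of `M`. -/
def PT {n : ℕ} (M : Matrix (Fin n) (Fin n) (ZMod 2)) (p p' u : Fin n) : Fin n → ZMod 2 :=
  (Mᵀ.mulVec (e u) ⬝ᵥ e p) • ((Mᵀ.mulVec (e p) + e p') + (e u ⬝ᵥ Mᵀ.mulVec (e p)) • e u)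


lemma dot_e {n : ℕ} (x : Fin n → ZMod 2) (i : Fin n) : x ⬝ᵥ e i = x i := by
  simp [dotProduct, e, Pi.single_apply]

lemma e_dot {n : ℕ} (x : Fin n → ZMod 2) (i : Fin n) : e i ⬝ᵥ x = x i := by
  simp [dotProduct, e, Pi.single_apply]

lemma mulVec_e {n : ℕ} (M : Matrix (Fin n) (Fin n) (ZMod 2)) (j i : Fin n) :
    M.mulVec (e j) i = M i j := by
  simp [Matrix.mulVec, dotProduct, e, Pi.single_apply]

lemma e_ne {n : ℕ} {i j : Fin n} (h : i ≠ j) : e i ⬝ᵥ e j = 0 := by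
  simp [e_dot, e, Pi.single_apply, h]

theorem stmt_19 {n : ℕ} (M : Matrix (Fin n) (Fin n) (ZMod 2))
    (hdiag : ∀ q : Fin n, M.mulVec (e q) ⬝ᵥ e q = 0)
    (p p' : Fin n) (hpp' : p ≠ p')
    (h1 : M.mulVec (e p) ⬝ᵥ e p' = 0) (h2 : M.mulVec (e p') ⬝ᵥ e p = 0)
    (hseged : ∀ u v : Fin n,
      (Mᵀ.mulVec (e v) ⬝ᵥ e p) * (M.mulVec (e u) ⬝ᵥ e p') +
        (M.mulVec (e u) ⬝ᵥ e p) * (Mᵀ.mulVec (e v) ⬝ᵥ e p') = 0)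
    (A : Fin n → ZMod 2)
    (hA : ∀ x y : Fin n, M.mulVec (e x) ⬝ᵥ Mᵀ.mulVec (e y) =
      (M.mulVec (e x) ⬝ᵥ e y) * (1 + A ⬝ᵥ (e x + e y))) :
    ∀ u v : Fin n, u ≠ v → u ≠ p' → v ≠ p' →
      P M p p' u ⬝ᵥ PT M p p' v =
        (M.mulVec (e u) ⬝ᵥ e p) * (Mᵀ.mulVec (e v) ⬝ᵥ e p) *
          (1 + (SM M).mulVec (e p) ⬝ᵥ e u + (SM M).mulVec (e p) ⬝ᵥ e v) := by
  intro u v huv hup hvp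
  have MM : M.mulVec (e p) ⬝ᵥ Mᵀ.mulVec (e p) = 0 := by
    have := hA p p
    have h0 : e p + e p = (0 : Fin n → ZMod 2) := by
      ext k; simp [CharTwo.add_self_eq_zero]
    rw [h0] at this
    simpa [hdiag p] using this
  have hMpp' : M p' p = 0 := by simpa [dot_e, mulVec_e] using h1
  have hMpp'2 : M p p' = 0 := by simpa [dot_e, mulVec_e] using h2
  simp only [P, PT, smul_dotProduct, dotProduct_smul, add_dotProduct, dotProduct_add,
    smul_eq_mul]
  rw [MM]
  simp only [SM, dot_e, e_dot, mulVec_e, Matrix.transpose_apply, Matrix.of_apply]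
  simp only [e, Pi.single_apply, if_neg (Ne.symm huv), if_neg (Ne.symm hup), if_neg hvp,
    if_pos rfl, hMpp', hMpp'2, if_true]
  ring
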